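/- One-epoch preliminary descent of mirror descent with incremental gradients: Let E be a finite-dimensional real inner product space, n ≥ 1, and let f_1, …, f_n : E → ℝ be differentiable with f := (1/n)·Σ_{i=1}^n f_i. Let X ⊆ E, let h satisfy the mirror hypotheses on X with Hessian bounds 0 < μ_X ≤ 𝓛_X, and let κ ≥ 𝓛_X/μ_X. Let L > 0, α > 0 with α ≤ 1/(2nL), and suppose the extended descent inequality f(u) − f(v) − ⟨∇f(v), u − v⟩ ≤ L·D_h(u, v) holds for all u, v ∈ X. Let σ be a permutation of {1, …, n} and let points y¹, …, y^{n+1} ∈ X satisfy y¹ = x and ∇h(y^{i+1}) = ∇h(y^i) − α·∇f_{σ(i)}(y^i) for i = 1, …, n, with x ∈ X and x′ := y^{n+1} ∈ X. Then f(x′) + D_h(x, x′)/(2nα) ≤ f(x) + (κ·α)/(2μ_X)·Σ_{i=1}^n ‖∇f_{σ(i)}(x) − ∇f_{σ(i)}(y^i)‖². -/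

import Mathlib

/-!
Summing the dual updates, `h' x - h' x' = (n α) • (f' x - ε)` for `x' = y n` and
`ε = (1/n) • ∑ i, (fs' (σ i) x - fs' (σ i) (y i))`, so the epoch is a single mirror step of size
`n α` along a perturbed gradient. For such a step the descent inequality, the three-point identity
`D(x', x) + D(x, x') = ⟪h' x' - h' x, x' - x⟫` and Young's inequality on `⟪ε, x' - x⟫` give the
claim, provided `μ ‖x' - x‖² ≤ κ (D(x', x) + D(x, x'))`; finally `n ‖ε‖² ≤ ∑ i, ‖…‖²`.

That proviso comes from the curve `t ↦ g* (h' b + t • (h' a - h' b))`, which stays in `X` and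
whose velocity `w` solves `∇²h · w = h' a - h' b`: the lower Hessian bound gives
`μ ‖a - b‖ ≤ ‖h' a - h' b‖`, and the upper one, through `‖H w‖² ≤ 𝓛 ⟪H w, w⟫` for a positive
operator `H`, gives `‖h' a - h' b‖² ≤ 2 𝓛 D(a, b)`.
-/

open RealInnerProductSpace

/-- The mirror hypotheses for a kernel `h` with gradient `h'` and Hessian `h''`
on a set `X`: `h` is twice continuously differentiable on an open set containing `X`,
the image `h' '' X` is convex, and there is a continuously differentiable local inverse
`gstar` of the mirror map `h'`, defined on an open set containing `h' '' X`, mapping the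
convex hull of `h' '' X` into `X`. -/
structure MirrorHyp {E : Type*} [NormedAddCommGroup E] [InnerProductSpace ℝ E]
    [CompleteSpace E] (h : E → ℝ) (h' : E → E) (h'' : E → E →L[ℝ] E) (X : Set E) where
  U : Set E
  isOpen_U : IsOpen U
  subset_U : X ⊆ U
  grad : ∀ x ∈ U, HasGradientAt h (h' x) x
  hess : ∀ x ∈ U, HasFDerivAt h' (h'' x) x
  hess_cont : ContinuousOn h'' U
  img_convex : Convex ℝ (h' '' X)
  gstar : E → E
  V : Set E
  isOpen_V : IsOpen V
  img_subset_V : h' '' X ⊆ V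
  gstar_contDiff : ContDiffOn ℝ 1 gstar V
  gstar_rightInv : ∀ w ∈ V, h' (gstar w) = w
  gstar_leftInv : ∀ x ∈ X, gstar (h' x) = x
  gstar_maps : ∀ w ∈ convexHull ℝ (h' '' X), gstar w ∈ X

noncomputable def bregman {E : Type*} [NormedAddCommGroup E] [InnerProductSpace ℝ E]
    (h : E → ℝ) (h' : E → E) (u v : E) : ℝ :=
  h u - h v - ⟪h' v, u - v⟫

section Elementary

variable {E : Type*} [NormedAddCommGroup E] [InnerProductSpace ℝ E]

theorem bregman_self (h : E → ℝ) (h' : E → E) (u : E) : bregman h h' u u = 0 := by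
  simp [bregman]

theorem bregman_add_bregman_swap (h : E → ℝ) (h' : E → E) (u v : E) :
    bregman h h' u v + bregman h h' v u = ⟪h' u - h' v, u - v⟫ := by
  simp only [bregman, inner_sub_left, inner_sub_right, real_inner_comm]
  ring

theorem two_mul_inner_le_mul_add_inv_mul {t : ℝ} (ht : 0 < t) (u v : E) :
    2 * ⟪u, v⟫ ≤ t * ‖u‖ ^ 2 + t⁻¹ * ‖v‖ ^ 2 := by
  have h0 : 0 ≤ ‖t • u - v‖ ^ 2 := sq_nonneg _
  rw [norm_sub_sq_real, norm_smul, real_inner_smul_left, mul_pow, Real.norm_of_nonneg ht.le]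
    at h0
  have : t * (2 * ⟪u, v⟫) ≤ t * (t * ‖u‖ ^ 2 + t⁻¹ * ‖v‖ ^ 2) := by
    rw [mul_add, ← mul_assoc t t⁻¹, mul_inv_cancel₀ ht.ne']
    linarith
  exact le_of_mul_le_mul_left this ht

theorem sq_norm_one_div_smul_sum_le {ι : Type*} (s : Finset ι) (d : ι → E) :
    ‖(1 / (s.card : ℝ)) • ∑ i ∈ s, d i‖ ^ 2 ≤ 1 / (s.card : ℝ) * ∑ i ∈ s, ‖d i‖ ^ 2 := by
  rcases s.eq_empty_or_nonempty with rfl | hs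
  · simp
  have hcard : (0 : ℝ) < s.card := by exact_mod_cast hs.card_pos
  have hsum : (∑ i ∈ s, ‖d i‖) ^ 2 ≤ s.card * ∑ i ∈ s, ‖d i‖ ^ 2 := sq_sum_le_card_mul_sum_sq
  calc ‖(1 / (s.card : ℝ)) • ∑ i ∈ s, d i‖ ^ 2
      ≤ (1 / (s.card : ℝ)) ^ 2 * (∑ i ∈ s, ‖d i‖) ^ 2 := by
        rw [norm_smul, mul_pow, Real.norm_of_nonneg (by positivity)]
        gcongr
        exact norm_sum_le s d
    _ ≤ (1 / (s.card : ℝ)) ^ 2 * (s.card * ∑ i ∈ s, ‖d i‖ ^ 2) := by gcongr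
    _ = 1 / (s.card : ℝ) * ∑ i ∈ s, ‖d i‖ ^ 2 := by field_simp

end Elementary

theorem sub_eq_smul_sum_of_succ_eq_sub_smul {R M : Type*} [Ring R] [AddCommGroup M]
    [Module R M] {n : ℕ} {z : ℕ → M} {g : Fin n → M} {α : R}
    (hz : ∀ i : Fin n, z (i + 1) = z i - α • g i) :
    z 0 - z n = α • ∑ i, g i := by
  rw [← Finset.sum_range_sub', ← Fin.sum_univ_eq_sum_range (fun i => z i - z (i + 1)),
    Finset.smul_sum]
  exact Finset.sum_congr rfl fun i _ => by rw [hz i, sub_sub_cancel]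

theorem mul_le_one_of_le_one_div {α c : ℝ} (hα : 0 ≤ α) (h : α ≤ 1 / c) : α * c ≤ 1 := by
  rcases le_or_gt c 0 with hc | hc
  · exact (mul_nonpos_of_nonneg_of_nonpos hα hc).trans zero_le_one
  · rwa [← le_div_iff₀ hc]

theorem mirror_step_descent_of_perturbed_gradient {E : Type*} [NormedAddCommGroup E]
    [InnerProductSpace ℝ E] {f h : E → ℝ} {f' h' : E → E} {x x' ε : E} {L β μ κ : ℝ}
    (hβ : 0 < β) (hμ : 0 < μ) (hκ : 0 < κ) (hβL : 2 * β * L ≤ 1)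
    (hdescent : f x' - f x - ⟪f' x, x' - x⟫ ≤ L * bregman h h' x' x)
    (hstep : h' x - h' x' = β • (f' x - ε))
    (hstrong : μ * ‖x' - x‖ ^ 2 ≤ κ * (bregman h h' x' x + bregman h h' x x'))
    (hnonneg : 0 ≤ bregman h h' x' x) :
    f x' + bregman h h' x x' / (2 * β) ≤ f x + κ * β / (2 * μ) * ‖ε‖ ^ 2 := by
  set D₁ := bregman h h' x x'
  set D₂ := bregman h h' x' x
  have hthree : β * ⟪f' x, x' - x⟫ - β * ⟪ε, x' - x⟫ = -(D₁ + D₂) := by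
    rw [bregman_add_bregman_swap, ← mul_sub, ← inner_sub_left, ← real_inner_smul_left, ← hstep,
      ← neg_sub x' x, inner_neg_right, neg_neg]
  have hyoung : 2 * (β * ⟪ε, x' - x⟫) ≤ κ / μ * (β ^ 2 * ‖ε‖ ^ 2) + μ / κ * ‖x' - x‖ ^ 2 := by
    have := two_mul_inner_le_mul_add_inv_mul (div_pos hκ hμ) (β • ε) (x' - x)
    rwa [real_inner_smul_left, norm_smul, mul_pow, Real.norm_of_nonneg hβ.le, inv_div] at this
  have hw : μ / κ * ‖x' - x‖ ^ 2 ≤ D₁ + D₂ := by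
    rw [div_mul_eq_mul_div, div_le_iff₀ hκ]
    linarith
  have hL : 2 * β * L * D₂ ≤ D₂ := mul_le_of_le_one_left hnonneg hβL
  have hdescent' : 2 * β * (f x' - f x - ⟪f' x, x' - x⟫) ≤ 2 * β * (L * D₂) :=
    mul_le_mul_of_nonneg_left hdescent (by positivity)
  have hdoubled : 2 * β * f x' + D₁ ≤ 2 * β * f x + κ / μ * β ^ 2 * ‖ε‖ ^ 2 := by
    linarith
  calc f x' + D₁ / (2 * β) = (2 * β * f x' + D₁) / (2 * β) := by field_simp
    _ ≤ (2 * β * f x + κ / μ * β ^ 2 * ‖ε‖ ^ 2) / (2 * β) := by gcongr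
    _ = f x + κ * β / (2 * μ) * ‖ε‖ ^ 2 := by field_simp

section Hessian

variable {E : Type*} [NormedAddCommGroup E] [InnerProductSpace ℝ E]

theorem inner_hessian_comm [CompleteSpace E] {h : E → ℝ} {h' : E → E} {H : E →L[ℝ] E} {u : E}
    (hgrad : ∀ᶠ z in nhds u, HasGradientAt h (h' z) z) (hhess : HasFDerivAt h' H u) (v w : E) :
    ⟪H v, w⟫ = ⟪H w, v⟫ := by
  let toDual := (InnerProductSpace.toDual ℝ E).toContinuousLinearEquiv.toContinuousLinearMap
  have := second_derivative_symmetric_of_eventually (f' := fun z => toDual (h' z))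
    (hgrad.mono fun z hz => hz.hasFDerivAt) (toDual.hasFDerivAt.comp u hhess) v w
  simpa [toDual] using this

theorem mul_norm_le_norm_apply {H : E →L[ℝ] E} {μ : ℝ} (hlo : ∀ v, μ * ‖v‖ ^ 2 ≤ ⟪H v, v⟫)
    (u : E) : μ * ‖u‖ ≤ ‖H u‖ := by
  rcases (norm_nonneg u).eq_or_lt with hu | hu
  · rw [← hu, mul_zero]
    exact norm_nonneg _
  refine le_of_mul_le_mul_right ?_ hu
  calc μ * ‖u‖ * ‖u‖ = μ * ‖u‖ ^ 2 := by ring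
    _ ≤ ⟪H u, u⟫ := hlo u
    _ ≤ ‖H u‖ * ‖u‖ := real_inner_le_norm _ _

theorem ContinuousLinearMap.IsPositive.sq_norm_apply_le {H : E →L[ℝ] E} (hH : H.IsPositive)
    {𝓛 : ℝ} (hup : ∀ v, ⟪H v, v⟫ ≤ 𝓛 * ‖v‖ ^ 2) (u : E) : ‖H u‖ ^ 2 ≤ 𝓛 * ⟪H u, u⟫ := by
  rcases (norm_nonneg (H u)).eq_or_lt with hHu | hHu
  · simp [norm_eq_zero.mp hHu.symm]
  have hCS := LinearMap.BilinForm.apply_mul_apply_le_of_forall_zero_le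
    ((innerₗ E).comp (H : E →ₗ[ℝ] E)) hH.inner_nonneg_left u (H u)
  simp only [LinearMap.comp_apply, innerₗ_apply_apply, ContinuousLinearMap.coe_coe] at hCS
  rw [hH.inner_left_eq_inner_right (H u) u, real_inner_self_eq_norm_sq] at hCS
  have hquad : ‖H u‖ ^ 2 * ‖H u‖ ^ 2 ≤ 𝓛 * ⟪H u, u⟫ * ‖H u‖ ^ 2 := by
    calc ‖H u‖ ^ 2 * ‖H u‖ ^ 2 ≤ ⟪H u, u⟫ * ⟪H (H u), H u⟫ := hCS
      _ ≤ ⟪H u, u⟫ * (𝓛 * ‖H u‖ ^ 2) :=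
        mul_le_mul_of_nonneg_left (hup (H u)) (hH.inner_nonneg_left u)
      _ = 𝓛 * ⟪H u, u⟫ * ‖H u‖ ^ 2 := by ring
  exact le_of_mul_le_mul_right hquad (by positivity)

end Hessian

def HessianBounds {E : Type*} [NormedAddCommGroup E] [InnerProductSpace ℝ E]
    (h'' : E → E →L[ℝ] E) (X : Set E) (μ 𝓛 : ℝ) : Prop :=
  ∀ u ∈ X, ∀ v : E, μ * ‖v‖ ^ 2 ≤ ⟪h'' u v, v⟫ ∧ ⟪h'' u v, v⟫ ≤ 𝓛 * ‖v‖ ^ 2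

namespace MirrorHyp

variable {E : Type*} [NormedAddCommGroup E] [InnerProductSpace ℝ E] [CompleteSpace E]
  {h : E → ℝ} {h' : E → E} {h'' : E → E →L[ℝ] E} {X : Set E} {a b : E} {t μ 𝓛 : ℝ}

theorem isPositive_hess (mh : MirrorHyp h h' h'' X) {u : E} (hu : u ∈ mh.U)
    (hpos : ∀ v, 0 ≤ ⟪h'' u v, v⟫) :
    (h'' u).IsPositive := by
  have hgrad : ∀ᶠ z in nhds u, HasGradientAt h (h' z) z :=
    Filter.eventually_of_mem (mh.isOpen_U.mem_nhds hu) mh.grad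
  refine ContinuousLinearMap.isPositive_def.2 ⟨fun v w => ?_, hpos⟩
  exact (inner_hessian_comm hgrad (mh.hess u hu) v w).trans (real_inner_comm _ _)

def dualPath (mh : MirrorHyp h h' h'' X) (a b : E) (t : ℝ) : E :=
  mh.gstar (h' b + t • (h' a - h' b))

theorem dualPath_mem (mh : MirrorHyp h h' h'' X) (ha : a ∈ X) (hb : b ∈ X)
    (ht : t ∈ Set.Icc (0 : ℝ) 1) :
    mh.dualPath a b t ∈ X :=
  mh.gstar_maps _ (subset_convexHull ℝ _
    (mh.img_convex.add_smul_sub_mem (Set.mem_image_of_mem h' hb) (Set.mem_image_of_mem h' ha) ht))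

theorem dualSegment_mem_V (mh : MirrorHyp h h' h'' X) (ha : a ∈ X) (hb : b ∈ X)
    (ht : t ∈ Set.Icc (0 : ℝ) 1) :
    h' b + t • (h' a - h' b) ∈ mh.V :=
  mh.img_subset_V
    (mh.img_convex.add_smul_sub_mem (Set.mem_image_of_mem h' hb) (Set.mem_image_of_mem h' ha) ht)

theorem dualPath_zero (mh : MirrorHyp h h' h'' X) (hb : b ∈ X) : mh.dualPath a b 0 = b := by
  simp [dualPath, mh.gstar_leftInv b hb]

theorem dualPath_one (mh : MirrorHyp h h' h'' X) (ha : a ∈ X) : mh.dualPath a b 1 = a := by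
  simp [dualPath, mh.gstar_leftInv a ha]

theorem grad_dualPath (mh : MirrorHyp h h' h'' X) (ha : a ∈ X) (hb : b ∈ X)
    (ht : t ∈ Set.Icc (0 : ℝ) 1) :
    h' (mh.dualPath a b t) = h' b + t • (h' a - h' b) :=
  mh.gstar_rightInv _ (mh.dualSegment_mem_V ha hb ht)

theorem hasDerivAt_dualPath (mh : MirrorHyp h h' h'' X) (ha : a ∈ X) (hb : b ∈ X)
    (ht : t ∈ Set.Icc (0 : ℝ) 1) :
    HasDerivAt (mh.dualPath a b) (deriv (mh.dualPath a b) t) t := by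
  have hV := mh.isOpen_V.mem_nhds (mh.dualSegment_mem_V ha hb ht)
  have hgstar := (mh.gstar_contDiff.differentiableOn one_ne_zero).differentiableAt hV
  exact (hgstar.comp t (by fun_prop)).hasDerivAt

/-- `h' ∘ dualPath` is affine with slope `h' a - h' b`; compare with the chain rule. -/
theorem hess_deriv_dualPath (mh : MirrorHyp h h' h'' X) (ha : a ∈ X) (hb : b ∈ X)
    (ht : t ∈ Set.Icc (0 : ℝ) 1) :
    h'' (mh.dualPath a b t) (deriv (mh.dualPath a b) t) = h' a - h' b := by
  have hU : mh.dualPath a b t ∈ mh.U := mh.subset_U (mh.dualPath_mem ha hb ht)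
  have hchain := (mh.hess _ hU).comp_hasDerivAt t (mh.hasDerivAt_dualPath ha hb ht)
  have hseg : HasDerivAt (fun s : ℝ => h' b + s • (h' a - h' b)) (h' a - h' b) t := by
    simpa using ((hasDerivAt_id t).smul_const (h' a - h' b)).const_add (h' b)
  have hcont : Continuous fun s : ℝ => h' b + s • (h' a - h' b) := by fun_prop
  have hV := mh.isOpen_V.mem_nhds (mh.dualSegment_mem_V ha hb ht)
  have heq : h' ∘ mh.dualPath a b =ᶠ[nhds t] fun s => h' b + s • (h' a - h' b) :=
    Filter.mem_of_superset (hcont.continuousAt.preimage_mem_nhds hV) fun s hs =>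
      mh.gstar_rightInv _ hs
  exact hchain.unique (hseg.congr_of_eventuallyEq heq)

theorem mul_norm_sub_le_norm_grad_sub (mh : MirrorHyp h h' h'' X) (hμ : 0 < μ)
    (hlo : ∀ u ∈ X, ∀ v, μ * ‖v‖ ^ 2 ≤ ⟪h'' u v, v⟫) (ha : a ∈ X) (hb : b ∈ X) :
    μ * ‖a - b‖ ≤ ‖h' a - h' b‖ := by
  have hspeed : ∀ t ∈ Set.Ico (0 : ℝ) 1, ‖deriv (mh.dualPath a b) t‖ ≤ ‖h' a - h' b‖ / μ := by
    intro t ht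
    have ht' := Set.Ico_subset_Icc_self ht
    rw [le_div_iff₀' hμ, ← mh.hess_deriv_dualPath ha hb ht']
    exact mul_norm_le_norm_apply (hlo _ (mh.dualPath_mem ha hb ht')) _
  have hmvt := norm_image_sub_le_of_norm_deriv_le_segment'
    (fun t ht => (mh.hasDerivAt_dualPath ha hb ht).hasDerivWithinAt) hspeed 1
    (Set.right_mem_Icc.2 zero_le_one)
  rw [mh.dualPath_zero hb, mh.dualPath_one ha, sub_zero, mul_one] at hmvt
  rwa [← le_div_iff₀' hμ]

theorem hasDerivAt_bregman_dualPath (mh : MirrorHyp h h' h'' X) (ha : a ∈ X) (hb : b ∈ X)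
    (ht : t ∈ Set.Icc (0 : ℝ) 1) :
    HasDerivAt (fun s => bregman h h' (mh.dualPath a b s) b)
      (t * ⟪h' a - h' b, deriv (mh.dualPath a b) t⟫) t := by
  have hU := mh.subset_U (mh.dualPath_mem ha hb ht)
  have hγ := mh.hasDerivAt_dualPath ha hb ht
  have hh := (mh.grad _ hU).hasFDerivAt.comp_hasDerivAt t hγ
  have hlin := (innerSL ℝ (h' b)).hasFDerivAt.comp_hasDerivAt t (hγ.sub_const b)
  refine ((hh.sub_const (h b)).sub hlin).congr_deriv ?_
  simp only [InnerProductSpace.toDual_apply_apply, innerSL_apply_apply,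
    mh.grad_dualPath ha hb ht, inner_add_left, real_inner_smul_left]
  ring

theorem sq_norm_grad_sub_le_bregman (mh : MirrorHyp h h' h'' X)
    (hpos : ∀ u ∈ X, ∀ v, 0 ≤ ⟪h'' u v, v⟫)
    (hup : ∀ u ∈ X, ∀ v, ⟪h'' u v, v⟫ ≤ 𝓛 * ‖v‖ ^ 2) (ha : a ∈ X) (hb : b ∈ X) :
    ‖h' a - h' b‖ ^ 2 ≤ 2 * 𝓛 * bregman h h' a b := by
  set v := h' a - h' b
  let φ : ℝ → ℝ := fun t => 𝓛 * bregman h h' (mh.dualPath a b t) b - t ^ 2 / 2 * ‖v‖ ^ 2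
  have hφ : ∀ t ∈ Set.Icc (0 : ℝ) 1,
      HasDerivAt φ (t * (𝓛 * ⟪v, deriv (mh.dualPath a b) t⟫ - ‖v‖ ^ 2)) t := by
    intro t ht
    refine (((mh.hasDerivAt_bregman_dualPath ha hb ht).const_mul 𝓛).sub
      (((hasDerivAt_pow 2 t).div_const 2).mul_const (‖v‖ ^ 2))).congr_deriv ?_
    push_cast
    ring
  have hslope : ∀ t ∈ Set.Icc (0 : ℝ) 1, ‖v‖ ^ 2 ≤ 𝓛 * ⟪v, deriv (mh.dualPath a b) t⟫ := by
    intro t ht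
    have hX := mh.dualPath_mem ha hb ht
    have := (mh.isPositive_hess (mh.subset_U hX) (hpos _ hX)).sq_norm_apply_le (hup _ hX)
      (deriv (mh.dualPath a b) t)
    rwa [mh.hess_deriv_dualPath ha hb ht] at this
  have hmono : MonotoneOn φ (Set.Icc 0 1) := by
    refine monotoneOn_of_hasDerivWithinAt_nonneg (convex_Icc 0 1)
      (fun t ht => (hφ t ht).continuousAt.continuousWithinAt)
      (fun t ht => (hφ t (interior_subset ht)).hasDerivWithinAt) fun t ht => ?_
    rw [interior_Icc] at ht
    exact mul_nonneg ht.1.le (sub_nonneg.2 (hslope t (Set.Ioo_subset_Icc_self ht)))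
  have := hmono (Set.left_mem_Icc.2 zero_le_one) (Set.right_mem_Icc.2 zero_le_one) zero_le_one
  simp only [φ, mh.dualPath_zero hb, mh.dualPath_one ha, bregman_self] at this
  linarith

theorem bregman_nonneg (mh : MirrorHyp h h' h'' X) (hμ : 0 < μ) (hμ𝓛 : μ ≤ 𝓛)
    (hbound : HessianBounds h'' X μ 𝓛) (ha : a ∈ X) (hb : b ∈ X) : 0 ≤ bregman h h' a b := by
  have hpos : ∀ u ∈ X, ∀ v, 0 ≤ ⟪h'' u v, v⟫ := fun u hu v =>
    (mul_nonneg hμ.le (sq_nonneg _)).trans (hbound u hu v).1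
  have := mh.sq_norm_grad_sub_le_bregman hpos (fun u hu v => (hbound u hu v).2) ha hb
  exact nonneg_of_mul_nonneg_right ((sq_nonneg _).trans this) (by linarith)

theorem mul_sq_norm_sub_le_bregman_add (mh : MirrorHyp h h' h'' X) (hμ : 0 < μ) (hμ𝓛 : μ ≤ 𝓛)
    (hbound : HessianBounds h'' X μ 𝓛) {κ : ℝ} (hκ : 𝓛 / μ ≤ κ) (ha : a ∈ X) (hb : b ∈ X) :
    μ * ‖a - b‖ ^ 2 ≤ κ * (bregman h h' a b + bregman h h' b a) := by
  have hpos : ∀ u ∈ X, ∀ v, 0 ≤ ⟪h'' u v, v⟫ := fun u hu v =>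
    (mul_nonneg hμ.le (sq_nonneg _)).trans (hbound u hu v).1
  have hup : ∀ u ∈ X, ∀ v, ⟪h'' u v, v⟫ ≤ 𝓛 * ‖v‖ ^ 2 := fun u hu v => (hbound u hu v).2
  have hdist := mh.mul_norm_sub_le_norm_grad_sub hμ (fun u hu v => (hbound u hu v).1) ha hb
  have hab := mh.sq_norm_grad_sub_le_bregman hpos hup ha hb
  have hba := mh.sq_norm_grad_sub_le_bregman hpos hup hb ha
  rw [norm_sub_rev] at hba
  have hκμ : 𝓛 ≤ κ * μ := (div_le_iff₀ hμ).1 hκ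
  have hsum : 0 ≤ bregman h h' a b + bregman h h' b a :=
    add_nonneg (mh.bregman_nonneg hμ hμ𝓛 hbound ha hb) (mh.bregman_nonneg hμ hμ𝓛 hbound hb ha)
  have : μ * (μ * ‖a - b‖ ^ 2) ≤ μ * (κ * (bregman h h' a b + bregman h h' b a)) := by
    calc μ * (μ * ‖a - b‖ ^ 2) = (μ * ‖a - b‖) ^ 2 := by ring
      _ ≤ ‖h' a - h' b‖ ^ 2 := by gcongr
      _ ≤ 𝓛 * (bregman h h' a b + bregman h h' b a) := by linarith
      _ ≤ κ * μ * (bregman h h' a b + bregman h h' b a) := by gcongr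
      _ = μ * (κ * (bregman h h' a b + bregman h h' b a)) := by ring
  exact le_of_mul_le_mul_left this hμ

end MirrorHyp

theorem one_epoch_preliminary_descent_general
    {E : Type*} [NormedAddCommGroup E] [InnerProductSpace ℝ E] [FiniteDimensional ℝ E]
    (n : ℕ) (hn : 1 ≤ n)
    (fs' : Fin n → E → E)
    (f : E → ℝ) (f' : E → E)
    (hf'def : ∀ u : E, f' u = (1 / (n : ℝ)) • ∑ i : Fin n, fs' i u)
    (X : Set E) (h : E → ℝ) (h' : E → E) (h'' : E → E →L[ℝ] E)
    (mh : MirrorHyp h h' h'' X)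
    (μX 𝓛X : ℝ) (hμX : 0 < μX) (hμ𝓛 : μX ≤ 𝓛X)
    (hbound : ∀ u ∈ X, ∀ v : E,
      μX * ‖v‖ ^ 2 ≤ ⟪h'' u v, v⟫ ∧ ⟪h'' u v, v⟫ ≤ 𝓛X * ‖v‖ ^ 2)
    (κ : ℝ) (hκ : 𝓛X / μX ≤ κ)
    (L α : ℝ) (hα : 0 < α) (hαL : α ≤ 1 / (2 * n * L))
    (hdescent : ∀ u ∈ X, ∀ v ∈ X,
      f u - f v - ⟪f' v, u - v⟫ ≤ L * (h u - h v - ⟪h' v, u - v⟫))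
    (σ : Equiv.Perm (Fin n)) (x : E) (hx : x ∈ X)
    (y : ℕ → E) (hy0 : y 0 = x)
    (hyX : ∀ i : ℕ, i ≤ n → y i ∈ X)
    (hupd : ∀ i : Fin n,
      h' (y ((i : ℕ) + 1)) = h' (y (i : ℕ)) - α • fs' (σ i) (y (i : ℕ))) :
    f (y n) + (h x - h (y n) - ⟪h' (y n), x - y n⟫) / (2 * n * α) ≤
      f x + (κ * α) / (2 * μX) *
        ∑ i : Fin n, ‖fs' (σ i) x - fs' (σ i) (y (i : ℕ))‖ ^ 2 := by
  have hx' : y n ∈ X := hyX n le_rfl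
  have hn' : (0 : ℝ) < n := by exact_mod_cast hn
  have h𝓛 : 0 < 𝓛X := hμX.trans_le hμ𝓛
  have hκ0 : 0 < κ := (div_pos h𝓛 hμX).trans_le hκ
  set d : Fin n → E := fun i => fs' (σ i) x - fs' (σ i) (y i)
  have hstep : h' x - h' (y n) = ((n : ℝ) * α) • (f' x - (1 / (n : ℝ)) • ∑ i, d i) := by
    have hsum := sub_eq_smul_sum_of_succ_eq_sub_smul (z := h' ∘ y) hupd
    simp only [Function.comp_apply, hy0] at hsum
    rw [hsum, hf'def, ← smul_sub, smul_smul, show (n : ℝ) * α * (1 / n) = α by field_simp,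
      ← Equiv.sum_comp σ (fun j => fs' j x), ← Finset.sum_sub_distrib]
    simp only [d, sub_sub_cancel]
  calc f (y n) + bregman h h' x (y n) / (2 * n * α)
      ≤ f x + κ * (n * α) / (2 * μX) * ‖(1 / (n : ℝ)) • ∑ i, d i‖ ^ 2 := by
        rw [mul_assoc 2]
        exact mirror_step_descent_of_perturbed_gradient (by positivity) hμX hκ0
          (by linarith [mul_le_one_of_le_one_div hα.le hαL]) (hdescent _ hx' _ hx) hstep
          (mh.mul_sq_norm_sub_le_bregman_add hμX hμ𝓛 hbound hκ hx' hx)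
          (mh.bregman_nonneg hμX hμ𝓛 hbound hx' hx)
    _ ≤ f x + κ * (n * α) / (2 * μX) * (1 / (n : ℝ) * ∑ i, ‖d i‖ ^ 2) := by
        gcongr
        simpa using sq_norm_one_div_smul_sum_le Finset.univ d
    _ = f x + κ * α / (2 * μX) * ∑ i, ‖d i‖ ^ 2 := by
        field_simp

/-- **One-epoch preliminary descent of mirror descent with incremental gradients.**
Starting from `x = y 0 ∈ X`, one epoch of mirror descent through the data in the order
given by a permutation `σ`, i.e. `∇h (y (i+1)) = ∇h (y i) - α • ∇f_{σ i} (y i)`,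
ends at `x' = y n` and satisfies
`f x' + D_h(x, x')/(2 n α) ≤ f x + (κ α)/(2 μX) * Σ_i ‖∇f_{σ i} x - ∇f_{σ i} (y i)‖²`,
provided `α ≤ 1/(2 n L)`, the extended descent inequality holds on `X`, the iterates
stay in `X`, and the kernel Hessian bounds `0 < μX ≤ 𝓛X` with `κ ≥ 𝓛X/μX` hold. -/
theorem one_epoch_preliminary_descent
    {E : Type*} [NormedAddCommGroup E] [InnerProductSpace ℝ E] [FiniteDimensional ℝ E]
    (n : ℕ) (hn : 1 ≤ n)
    (fs : Fin n → E → ℝ) (fs' : Fin n → E → E)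
    (hfsgrad : ∀ i : Fin n, ∀ x : E, HasGradientAt (fs i) (fs' i x) x)
    (f : E → ℝ) (f' : E → E)
    (hfdef : ∀ u : E, f u = (1 / (n : ℝ)) * ∑ i : Fin n, fs i u)
    (hf'def : ∀ u : E, f' u = (1 / (n : ℝ)) • ∑ i : Fin n, fs' i u)
    (X : Set E) (h : E → ℝ) (h' : E → E) (h'' : E → E →L[ℝ] E)
    (mh : MirrorHyp h h' h'' X)
    (μX 𝓛X : ℝ) (hμX : 0 < μX) (hμ𝓛 : μX ≤ 𝓛X)
    (hbound : ∀ u ∈ X, ∀ v : E,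
      μX * ‖v‖ ^ 2 ≤ ⟪h'' u v, v⟫ ∧ ⟪h'' u v, v⟫ ≤ 𝓛X * ‖v‖ ^ 2)
    (κ : ℝ) (hκ : 𝓛X / μX ≤ κ)
    (L α : ℝ) (hL : 0 < L) (hα : 0 < α) (hαL : α ≤ 1 / (2 * n * L))
    (hdescent : ∀ u ∈ X, ∀ v ∈ X,
      f u - f v - ⟪f' v, u - v⟫ ≤ L * (h u - h v - ⟪h' v, u - v⟫))
    (σ : Equiv.Perm (Fin n)) (x : E) (hx : x ∈ X)
    (y : ℕ → E) (hy0 : y 0 = x)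
    (hyX : ∀ i : ℕ, i ≤ n → y i ∈ X)
    (hupd : ∀ i : Fin n,
      h' (y ((i : ℕ) + 1)) = h' (y (i : ℕ)) - α • fs' (σ i) (y (i : ℕ))) :
    f (y n) + (h x - h (y n) - ⟪h' (y n), x - y n⟫) / (2 * n * α) ≤
      f x + (κ * α) / (2 * μX) *
        ∑ i : Fin n, ‖fs' (σ i) x - fs' (σ i) (y (i : ℕ))‖ ^ 2 :=
  one_epoch_preliminary_descent_general n hn fs' f f' hf'def X h h' h'' mh μX 𝓛X hμX hμ𝓛 hbound κ hκ
    L α hα hαL hdescent σ x hx y hy0 hyX hupd
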